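/- Let u ∈ C²([0,1]) satisfy u(x) = u(1−x) for all x ∈ [0,1], and suppose W(u) < c₀², where W(u) = ∫₀¹ u''(x)²/(1+u'(x)²)^{5/2} dx and c₀ = ∫_{-∞}^{∞} (1+t²)^{-5/4} dt. Then for every x ∈ [0,1], |u'(x)| ≤ G⁻¹( √(W(u))/2 ), where G(x) = ∫₀ˣ (1+t²)^{-5/4} dt and G⁻¹ : (−c₀/2, c₀/2) → ℝ is its inverse. -/

import Mathlib

open Real MeasureTheory

/-- `G x = ∫₀ˣ (1+t²)^{-5/4} dt`. -/
noncomputable def G (x : ℝ) : ℝ := ∫ t in (0:ℝ)..x, (1 + t ^ 2) ^ (-(5:ℝ)/4)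

/-- `c₀ = ∫_ℝ (1+t²)^{-5/4} dt`. -/
noncomputable def c₀ : ℝ := ∫ t : ℝ, (1 + t ^ 2) ^ (-(5:ℝ)/4)

/-- The inverse of `G` (a strictly increasing odd bijection of `ℝ` onto `(-c₀/2, c₀/2)`). -/
noncomputable def Ginv : ℝ → ℝ := Function.invFun G

/-- The elastic energy `W(u) = ∫₀¹ u''²/(1+u'²)^{5/2} dx`. -/
noncomputable def W (u : ℝ → ℝ) : ℝ :=
  ∫ x in (0:ℝ)..1, iteratedDeriv 2 u x ^ 2 / (1 + deriv u x ^ 2) ^ ((5:ℝ)/2)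

/-!
With `φ = G ∘ u'` one has `φ' = u'' (1 + u'²)^{-5/4}`, so `W(u) = ∫₀¹ φ'²`. Symmetry of `u` about
`1/2` makes `φ` odd about `1/2` (since `G` is odd), so `φ(1/2) = 0` and `φ'²` carries half of the
energy on each side of `1/2`. Cauchy–Schwarz on the segment between `1/2` and `x` then gives
`G(u'(x))² ≤ |x - 1/2| · W(u)/2 ≤ W(u)/4`. As `√W(u)/2 < c₀/2 = sup G`, this value is attained by
`G`, and monotonicity of `G` turns the bound into `|u'(x)| ≤ G⁻¹(√W(u)/2)`.
-/

open Filter Topology Set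

theorem sq_intervalIntegral_le_mul_intervalIntegral_sq {g : ℝ → ℝ} {a b : ℝ} (hab : a ≤ b)
    (hg : IntervalIntegrable g volume a b)
    (hg2 : IntervalIntegrable (fun t => g t ^ 2) volume a b) :
    (∫ t in a..b, g t) ^ 2 ≤ (b - a) * ∫ t in a..b, g t ^ 2 := by
  rcases hab.eq_or_lt with rfl | hlt
  · simp
  set I := ∫ t in a..b, g t
  set J := ∫ t in a..b, g t ^ 2
  have hexpand (c : ℝ) : ∫ t in a..b, (g t - c) ^ 2 = J - 2 * c * I + c ^ 2 * (b - a) := by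
    have hsplit : (fun t => (g t - c) ^ 2) = fun t => (g t ^ 2 - 2 * c * g t) + c ^ 2 := by
      ext t; ring
    rw [hsplit, intervalIntegral.integral_add (hg2.sub (hg.const_mul _)) intervalIntegrable_const,
      intervalIntegral.integral_sub hg2 (hg.const_mul _), intervalIntegral.integral_const_mul,
      intervalIntegral.integral_const, smul_eq_mul]
    ring
  have hL : 0 < b - a := sub_pos.2 hlt
  -- `0 ≤ ∫ (g - c)²` at the mean value `c = I / (b - a)`
  have := hexpand (I / (b - a)) ▸
    intervalIntegral.integral_nonneg hab fun t _ => sq_nonneg (g t - I / (b - a))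
  field_simp at this
  nlinarith

theorem sq_sub_le_mul_intervalIntegral_deriv_sq {φ : ℝ → ℝ} (hφ : ContDiff ℝ 1 φ)
    {a b s t : ℝ} (has : a ≤ s) (hst : s ≤ t) (htb : t ≤ b) :
    (φ t - φ s) ^ 2 ≤ (t - s) * ∫ x in a..b, deriv φ x ^ 2 := by
  have hφ' : Continuous (deriv φ) := hφ.continuous_deriv le_rfl
  rw [← intervalIntegral.integral_deriv_eq_sub (fun x _ => hφ.differentiable one_ne_zero x)
    (hφ'.intervalIntegrable s t)]
  calc (∫ x in s..t, deriv φ x) ^ 2 ≤ (t - s) * ∫ x in s..t, deriv φ x ^ 2 :=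
        sq_intervalIntegral_le_mul_intervalIntegral_sq hst (hφ'.intervalIntegrable s t)
          ((hφ'.pow 2).intervalIntegrable s t)
    _ ≤ (t - s) * ∫ x in a..b, deriv φ x ^ 2 :=
        mul_le_mul_of_nonneg_left (intervalIntegral.integral_mono_interval has hst htb
          (Eventually.of_forall fun x => sq_nonneg _) ((hφ'.pow 2).intervalIntegrable a b))
          (sub_nonneg.2 hst)

theorem deriv_eq_neg_mul_deriv_const_sub {f : ℝ → ℝ} {s : Set ℝ} (hs : IsOpen s) {a c : ℝ}
    (h : ∀ x ∈ s, f x = c * f (a - x)) {x : ℝ} (hx : x ∈ s) :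
    deriv f x = -(c * deriv f (a - x)) := by
  have hev : f =ᶠ[𝓝 x] fun y => c * f (a - y) := eventually_of_mem (hs.mem_nhds hx) h
  rw [hev.deriv_eq, deriv_const_mul_field']
  simp only [deriv_comp_const_sub, mul_neg]

theorem intervalIntegral_reflect_eq {f : ℝ → ℝ} {a b c : ℝ} (hac : a ≤ c) (hcb : c ≤ b)
    (h : ∀ x ∈ Ioo a b, f (a + b - x) = f x) :
    ∫ x in a + b - c..b, f x = ∫ x in a..c, f x := by
  have hreflect : ∫ x in a + b - c..b, f x = ∫ x in a + b - c..b, f (a + b - x) := by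
    rw [intervalIntegral.integral_of_le (by linarith),
      intervalIntegral.integral_of_le (by linarith),
      integral_Ioc_eq_integral_Ioo, integral_Ioc_eq_integral_Ioo]
    exact setIntegral_congr_fun measurableSet_Ioo fun x hx =>
      (h x ⟨by linarith [hx.1], hx.2⟩).symm
  rw [hreflect, intervalIntegral.integral_comp_sub_left]
  congr 1 <;> ring

theorem continuous_one_add_sq_rpow (s : ℝ) : Continuous fun t : ℝ => (1 + t ^ 2) ^ s :=
  (continuous_const.add (continuous_pow 2)).rpow_const fun t =>
    Or.inl (by positivity : (1:ℝ) + t ^ 2 ≠ 0)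

theorem integrable_one_add_sq_rpow {s : ℝ} (hs : s < -1 / 2) :
    Integrable fun t : ℝ => (1 + t ^ 2) ^ s := by
  have h := integrable_rpow_neg_one_add_norm_sq (E := ℝ) (μ := volume) (r := -2 * s)
    (by simp; linarith)
  simpa [sq_abs, show -(-2 * s) / 2 = s by ring] using h

theorem c₀_pos : 0 < c₀ :=
  integral_pos_of_integrable_nonneg_nonzero (x := 0) (continuous_one_add_sq_rpow _)
    (integrable_one_add_sq_rpow (by norm_num)) (fun t => by positivity) (by norm_num)

theorem hasDerivAt_G (x : ℝ) : HasDerivAt G ((1 + x ^ 2) ^ (-(5:ℝ)/4)) x :=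
  intervalIntegral.integral_hasDerivAt_right ((continuous_one_add_sq_rpow _).intervalIntegrable _ _)
    ((continuous_one_add_sq_rpow _).stronglyMeasurableAtFilter _ _)
    (continuous_one_add_sq_rpow _).continuousAt

theorem deriv_G : deriv G = fun x => (1 + x ^ 2) ^ (-(5:ℝ)/4) :=
  funext fun x => (hasDerivAt_G x).deriv

theorem contDiff_G : ContDiff ℝ 1 G :=
  contDiff_one_iff_deriv.2 ⟨fun x => (hasDerivAt_G x).differentiableAt,
    deriv_G ▸ continuous_one_add_sq_rpow _⟩

theorem strictMono_G : StrictMono G :=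
  strictMono_of_deriv_pos fun x => by rw [deriv_G]; positivity

theorem G_zero : G 0 = 0 := intervalIntegral.integral_same

theorem G_neg (x : ℝ) : G (-x) = -G x := by
  have h := intervalIntegral.integral_comp_neg (a := 0) (b := x)
    (fun t : ℝ => (1 + t ^ 2) ^ (-(5:ℝ)/4))
  simp only [neg_sq, neg_zero] at h
  rw [G, G, intervalIntegral.integral_symm, ← h]

theorem G_abs (x : ℝ) : G |x| = |G x| := by
  rcases le_or_gt 0 x with hx | hx
  · rw [abs_of_nonneg hx, abs_of_nonneg (G_zero ▸ strictMono_G.monotone hx)]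
  · rw [abs_of_neg hx, G_neg, abs_of_neg (G_zero ▸ strictMono_G hx)]

theorem tendsto_G_atTop : Tendsto G atTop (𝓝 (c₀ / 2)) := by
  have hhalf : ∫ t in Ioi (0:ℝ), (1 + t ^ 2) ^ (-(5:ℝ)/4) = c₀ / 2 := by
    have h := integral_comp_abs (f := fun t : ℝ => (1 + t ^ 2) ^ (-(5:ℝ)/4))
    simp only [sq_abs] at h
    rw [c₀, h]; ring
  exact hhalf ▸ intervalIntegral_tendsto_integral_Ioi 0
    (integrable_one_add_sq_rpow (by norm_num)).integrableOn tendsto_id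

theorem G_Ginv {y : ℝ} (hy₀ : 0 ≤ y) (hy : y < c₀ / 2) : G (Ginv y) = y := by
  have hmem : y ∈ range G :=
    mem_range_of_exists_le_of_exists_ge contDiff_G.continuous ⟨0, by rwa [G_zero]⟩
    (((tendsto_order.1 tendsto_G_atTop).1 y hy).exists.imp fun _ => le_of_lt)
  exact Function.invFun_eq hmem

theorem abs_le_Ginv {x y : ℝ} (hy : y < c₀ / 2) (h : |G x| ≤ y) : |x| ≤ Ginv y := by
  rw [← strictMono_G.le_iff_le, G_Ginv ((abs_nonneg _).trans h) hy, G_abs]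
  exact h

theorem W_nonneg (u : ℝ → ℝ) : 0 ≤ W u :=
  intervalIntegral.integral_nonneg zero_le_one fun x _ => by positivity

section SymmetricProfile

variable {u : ℝ → ℝ}

theorem W_eq_intervalIntegral_deriv_G_comp_deriv_sq (hu : ContDiff ℝ 2 u) :
    W u = ∫ x in (0:ℝ)..1, deriv (G ∘ deriv u) x ^ 2 := by
  have hu' : Differentiable ℝ (deriv u) := (hu.deriv' (n := 1)).differentiable one_ne_zero
  refine intervalIntegral.integral_congr fun x _ => ?_
  have hpos : 0 < 1 + deriv u x ^ 2 := by positivity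
  rw [deriv_comp x (hasDerivAt_G _).differentiableAt (hu' x), deriv_G, iteratedDeriv_succ,
    iteratedDeriv_one, mul_pow, ← rpow_natCast ((1 + deriv u x ^ 2) ^ _) 2, ← rpow_mul hpos.le,
    div_eq_mul_inv, ← rpow_neg hpos.le]
  norm_num
  ring

theorem G_comp_deriv_eq_neg_reflect (hsym : ∀ x ∈ Icc (0:ℝ) 1, u x = u (1 - x)) {x : ℝ}
    (hx : x ∈ Ioo (0:ℝ) 1) :
    (G ∘ deriv u) x = -(G ∘ deriv u) (1 - x) := by
  have h := deriv_eq_neg_mul_deriv_const_sub isOpen_Ioo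
    (fun y hy => (hsym y (Ioo_subset_Icc_self hy)).trans (one_mul _).symm) hx
  rw [Function.comp_apply, h, one_mul, G_neg, Function.comp_apply]

theorem G_deriv_half (hsym : ∀ x ∈ Icc (0:ℝ) 1, u x = u (1 - x)) : G (deriv u (1 / 2)) = 0 := by
  have h := G_comp_deriv_eq_neg_reflect hsym (x := 1 / 2) (by norm_num)
  norm_num at h
  linarith

theorem intervalIntegral_deriv_G_comp_deriv_sq_halves (hsym : ∀ x ∈ Icc (0:ℝ) 1, u x = u (1 - x))
    (hu : ContDiff ℝ 2 u) :
    ∫ x in (0:ℝ)..1 / 2, deriv (G ∘ deriv u) x ^ 2 = W u / 2 ∧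
      ∫ x in (1 / 2:ℝ)..1, deriv (G ∘ deriv u) x ^ 2 = W u / 2 := by
  have hφ'sq : Continuous fun x => deriv (G ∘ deriv u) x ^ 2 :=
    ((contDiff_G.comp (hu.deriv' (n := 1))).continuous_deriv le_rfl).pow 2
  have hreflect : ∀ x ∈ Ioo (0:ℝ) 1,
      deriv (G ∘ deriv u) (0 + 1 - x) ^ 2 = deriv (G ∘ deriv u) x ^ 2 := by
    intro x hx
    have h := deriv_eq_neg_mul_deriv_const_sub isOpen_Ioo
      (fun y hy => (G_comp_deriv_eq_neg_reflect hsym hy).trans (neg_one_mul _).symm) hx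
    rw [h, zero_add]
    ring
  have hhalves := intervalIntegral_reflect_eq (f := fun x => deriv (G ∘ deriv u) x ^ 2)
    (a := 0) (b := 1) (c := 1 / 2) (by norm_num) (by norm_num) hreflect
  have hsum := intervalIntegral.integral_add_adjacent_intervals (a := 0) (b := 1 / 2) (c := 1)
    (hφ'sq.intervalIntegrable (μ := volume) _ _) (hφ'sq.intervalIntegrable _ _)
  rw [← W_eq_intervalIntegral_deriv_G_comp_deriv_sq hu] at hsum
  norm_num at hhalves
  constructor <;> linarith

theorem sq_G_deriv_le (hsym : ∀ x ∈ Icc (0:ℝ) 1, u x = u (1 - x)) (hu : ContDiff ℝ 2 u) {x : ℝ}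
    (hx : x ∈ Icc (0:ℝ) 1) :
    G (deriv u x) ^ 2 ≤ W u / 4 := by
  have hφ : ContDiff ℝ 1 (G ∘ deriv u) := contDiff_G.comp (hu.deriv' (n := 1))
  obtain ⟨hleft, hright⟩ := intervalIntegral_deriv_G_comp_deriv_sq_halves hsym hu
  have hW := W_nonneg u
  rcases le_total (1 / 2) x with hx' | hx'
  · have h := sq_sub_le_mul_intervalIntegral_deriv_sq hφ le_rfl hx' hx.2
    rw [hright, Function.comp_apply, Function.comp_apply, G_deriv_half hsym, sub_zero] at h
    nlinarith [hx.2]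
  · have h := sq_sub_le_mul_intervalIntegral_deriv_sq hφ hx.1 hx' le_rfl
    rw [hleft, Function.comp_apply, Function.comp_apply, G_deriv_half hsym, zero_sub, neg_sq] at h
    nlinarith [hx.1]

end SymmetricProfile

/-- Gradient bound: if `u ∈ C²` is symmetric about `x = 1/2` and `W(u) < c₀²`, then
`|u'(x)| ≤ G⁻¹(√(W(u))/2)` for all `x ∈ [0,1]`. -/
theorem stmt_19 (u : ℝ → ℝ) (hu : ContDiff ℝ 2 u)
    (hsym : ∀ x ∈ Set.Icc (0:ℝ) 1, u x = u (1 - x))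
    (hW : W u < c₀ ^ 2) :
    ∀ x ∈ Set.Icc (0:ℝ) 1, |deriv u x| ≤ Ginv (Real.sqrt (W u) / 2) := by
  intro x hx
  have hsqrt : √(W u) < c₀ := (sqrt_lt' c₀_pos).2 hW
  refine abs_le_Ginv (by linarith) ?_
  calc |G (deriv u x)| ≤ √(W u / 4) := abs_le_sqrt (sq_G_deriv_le hsym hu hx)
    _ = √(W u) / 2 := by rw [sqrt_div' _ (by norm_num : (0:ℝ) ≤ 4), show (4:ℝ) = 2 ^ 2 by norm_num,
      sqrt_sq (by norm_num)]
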